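/- Let g ∈ ℂ[x₀,…,x₅] be a homogeneous polynomial of degree 3 such that every monomial occurring in g has nonpositive weight with respect to the weight vector (1,0,0,0,0,-1), or such that every monomial occurring in g has nonpositive weight with respect to (1,1,0,0,0,-2). Then there exists an invertible linear change of coordinates T ∈ GL(6,ℂ) such that every monomial occurring in g∘T has nonpositive weight with respect to the weight vector (2,0,0,0,-1,-1). -/

import Mathlib

open MvPolynomial

/-- The weight of a monomial exponent `d` with respect to an integer weight vector `a`. -/
def monomialWeight (a : Fin 6 → ℤ) (d : Fin 6 →₀ ℕ) : ℤ :=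
  ∑ j, (d j : ℤ) * a j

/-- The polynomial obtained from `g` by the invertible linear substitution of variables
`xᵢ ↦ ∑ⱼ Tᵢⱼ xⱼ` given by `T ∈ GL(6, ℂ)`. -/
noncomputable def changeCoords (T : Matrix.GeneralLinearGroup (Fin 6) ℂ)
    (g : MvPolynomial (Fin 6) ℂ) : MvPolynomial (Fin 6) ℂ :=
  aeval (fun i => ∑ j, (T : Matrix (Fin 6) (Fin 6) ℂ) i j • X j) g

namespace S678

abbrev MP := MvPolynomial (Fin 6) ℂ

lemma mw_add (w : Fin 6 → ℤ) (d e : Fin 6 →₀ ℕ) :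
    monomialWeight w (d + e) = monomialWeight w d + monomialWeight w e := by
  simp only [monomialWeight, Finsupp.add_apply, ← Finset.sum_add_distrib]
  congr 1; funext j; push_cast; ring

lemma mw_zero (w : Fin 6 → ℤ) : monomialWeight w 0 = 0 := by
  simp [monomialWeight]

lemma mw_single (w : Fin 6 → ℤ) (i : Fin 6) :
    monomialWeight w (Finsupp.single i 1) = w i := by
  simp [monomialWeight, Finsupp.single_apply]

/-- all monomials of `p` have weight at most `m` -/
def okw (w : Fin 6 → ℤ) (m : ℤ) (p : MP) : Prop :=
  ∀ d, m < monomialWeight w d → coeff d p = 0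

lemma okw_zero (w m) : okw w m (0 : MP) := by intro d _; simp

lemma okw_add {w m} {p q : MP} (hp : okw w m p) (hq : okw w m q) : okw w m (p + q) := by
  intro d hd; simp [coeff_add, hp d hd, hq d hd]

lemma okw_sum {w m} {ι : Type*} (s : Finset ι) (f : ι → MP)
    (h : ∀ i ∈ s, okw w m (f i)) : okw w m (∑ i ∈ s, f i) := by
  classical
  induction s using Finset.induction_on with
  | empty => simpa using okw_zero w m
  | insert _ _ hx ih =>
    rw [Finset.sum_insert hx]
    exact okw_add (h _ (Finset.mem_insert_self _ _))
      (ih fun i hi => h i (Finset.mem_insert_of_mem hi))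

lemma okw_smul {w m} {p : MP} (c : ℂ) (hp : okw w m p) : okw w m (c • p) := by
  intro d hd; simp [hp d hd]

lemma okw_mono {w m m'} {p : MP} (hmm : m ≤ m') (hp : okw w m p) : okw w m' p := by
  intro d hd; exact hp d (lt_of_le_of_lt hmm hd)

lemma okw_C (w) (r : ℂ) : okw w 0 (C r : MP) := by
  intro d hd
  rw [coeff_C]
  rcases eq_or_ne d 0 with h | h
  · subst h; simp [mw_zero] at hd
  · simp [(Ne.symm h)]

lemma okw_one (w) : okw w 0 (1 : MP) := by simpa using okw_C w 1

lemma okw_X (w) (i : Fin 6) : okw w (w i) (X i : MP) := by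
  intro d hd
  rw [X, coeff_monomial]
  rcases eq_or_ne (Finsupp.single i 1) d with h | h
  · subst h; simp [mw_single] at hd
  · simp [h]

lemma okw_mul {w m n} {p q : MP} (hp : okw w m p) (hq : okw w n q) :
    okw w (m + n) (p * q) := by
  intro d hd
  rw [coeff_mul]
  apply Finset.sum_eq_zero
  intro x hx
  have hxd : x.1 + x.2 = d := Finset.HasAntidiagonal.mem_antidiagonal.mp hx
  have hw : monomialWeight w x.1 + monomialWeight w x.2 = monomialWeight w d := by
    rw [← hxd, mw_add]
  rcases lt_or_ge m (monomialWeight w x.1) with h | h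
  · rw [hp _ h, zero_mul]
  · have : n < monomialWeight w x.2 := by omega
    rw [hq _ this, mul_zero]

lemma okw_pow {w m} {p : MP} (hp : okw w m p) (k : ℕ) : okw w (k * m) (p ^ k) := by
  induction k with
  | zero => simpa using okw_one w
  | succ n ih =>
    have := okw_mul ih hp
    rw [pow_succ]
    have he : ((n+1 : ℕ) : ℤ) * m = (n : ℤ) * m + m := by push_cast; ring
    rw [he]
    exact this

lemma okw_prod {w} {ι : Type*} (s : Finset ι) (f : ι → MP) (m : ι → ℤ)
    (h : ∀ i ∈ s, okw w (m i) (f i)) :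
    okw w (∑ i ∈ s, m i) (∏ i ∈ s, f i) := by
  classical
  induction s using Finset.induction_on with
  | empty => simpa using okw_one w
  | insert _ _ hx ih =>
    rw [Finset.sum_insert hx, Finset.prod_insert hx]
    exact okw_mul (h _ (Finset.mem_insert_self _ _))
      (ih fun i hi => h i (Finset.mem_insert_of_mem hi))

lemma okw_aeval_monomial {w} (f : Fin 6 → MP) (m : Fin 6 → ℤ)
    (hf : ∀ i, okw w (m i) (f i)) (d : Fin 6 →₀ ℕ) (r : ℂ) :
    okw w (∑ i, (d i : ℤ) * m i) (aeval f (monomial d r)) := by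
  rw [aeval_monomial]
  have h0 : (0 : ℤ) + (∑ i, (d i : ℤ) * m i) = ∑ i, (d i : ℤ) * m i := by ring
  rw [← h0]
  apply okw_mul (by simpa using okw_C w r)
  rw [Finsupp.prod_fintype _ _ (fun i => pow_zero (f i))]
  have := okw_prod (Finset.univ) (fun i => f i ^ d i) (fun i => (d i : ℤ) * m i)
    (fun i _ => okw_pow (hf i) (d i))
  exact this



noncomputable def phi (c : Fin 6 → ℂ) : (Fin 6 → ℂ) →ₗ[ℂ] ℂ where
  toFun v := ∑ j, c j * v j
  map_add' u v := by simp [mul_add, Finset.sum_add_distrib]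
  map_smul' r v := by simp [Finset.mul_sum, smul_eq_mul]; congr 1; funext j; ring

lemma phi_apply (c : Fin 6 → ℂ) (v : Fin 6 → ℂ) : phi c v = ∑ j, c j * v j := rfl

def ee (i : Fin 6) : Fin 6 → ℂ := Pi.single i 1

lemma ee_apply (i j : Fin 6) : ee i j = if i = j then 1 else 0 := by
  simp [ee, Pi.single_apply, eq_comm]

lemma phi_ee (c : Fin 6 → ℂ) (j : Fin 6) : phi c (ee j) = c j := by
  simp [phi_apply, ee_apply, mul_ite]

lemma exists_good_matrix (c : Fin 6 → ℂ) :
    ∃ M : Matrix (Fin 6) (Fin 6) ℂ, IsUnit M ∧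
      (∀ k, M 0 k = if k = 0 then 1 else 0) ∧
      (∀ i, M i 0 = if i = 0 then 1 else 0) ∧
      (∀ k, M 5 k = if k = 5 then 1 else 0) ∧
      (∀ i, M i 5 = if i = 5 then 1 else 0) ∧
      (∀ k : Fin 6, k ≠ 0 → k ≠ 4 → k ≠ 5 → ∑ j, c j * M j k = 0) := by
  classical
  by_cases hmid : c 1 = 0 ∧ c 2 = 0 ∧ c 3 = 0 ∧ c 4 = 0
  · refine ⟨1, isUnit_one, ?_, ?_, ?_, ?_, ?_⟩
    · intro k; simp [Matrix.one_apply, eq_comm]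
    · intro i; simp [Matrix.one_apply]
    · intro k; simp [Matrix.one_apply, eq_comm]
    · intro i; simp [Matrix.one_apply]
    · intro k hk0 hk4 hk5
      have : ∑ j, c j * (1 : Matrix (Fin 6) (Fin 6) ℂ) j k = c k := by
        simp [Matrix.one_apply, mul_ite]
      rw [this]
      have hk : k = 1 ∨ k = 2 ∨ k = 3 := by omega
      rcases hk with h | h | h <;> subst h <;> tauto
  · obtain ⟨k0, hk0ne0, hk0ne5, hck0⟩ : ∃ k0 : Fin 6, k0 ≠ 0 ∧ k0 ≠ 5 ∧ c k0 ≠ 0 := by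
      by_cases h1 : c 1 = 0
      · by_cases h2 : c 2 = 0
        · by_cases h3 : c 3 = 0
          · exact ⟨4, by decide, by decide, fun h4 => hmid ⟨h1, h2, h3, h4⟩⟩
          · exact ⟨3, by decide, by decide, h3⟩
        · exact ⟨2, by decide, by decide, h2⟩
      · exact ⟨1, by decide, by decide, h1⟩
    have hee0 : ee k0 0 = 0 := by rw [ee_apply]; simp [hk0ne0]
    have hee5 : ee k0 5 = 0 := by rw [ee_apply]; simp [hk0ne5]
    set φ := phi c with hφdef
    set ψ : (Fin 6 → ℂ) →ₗ[ℂ] (Fin 3 → ℂ) :=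
      LinearMap.pi ![LinearMap.proj 0, LinearMap.proj 5, φ] with hψdef
    have hψ0 : ∀ u : Fin 6 → ℂ, ψ u 0 = u 0 := fun u => rfl
    have hψ1 : ∀ u : Fin 6 → ℂ, ψ u 1 = u 5 := fun u => rfl
    have hψ2 : ∀ u : Fin 6 → ℂ, ψ u 2 = φ u := fun u => rfl
    have hsurj : Function.Surjective ψ := by
      intro y
      refine ⟨y 0 • ee 0 + ((y 2 - y 0 * c 0 - y 1 * c 5) / c k0) • ee k0
        + y 1 • ee 5, ?_⟩
      funext i
      fin_cases i
      · show ψ _ 0 = y 0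
        rw [hψ0]
        simp [ee_apply, hee0, hk0ne0]
      · show ψ _ 1 = y 1
        rw [hψ1]
        simp [ee_apply, hee5, hk0ne5]
      · show ψ _ 2 = y 2
        rw [hψ2]
        simp only [map_add, map_smul, phi_ee, smul_eq_mul, hφdef]
        field_simp
        ring
    have hker : Module.finrank ℂ (LinearMap.ker ψ) = 3 := by
      have h1 := LinearMap.finrank_range_add_finrank_ker ψ
      rw [LinearMap.range_eq_top.mpr hsurj, finrank_top] at h1
      simp only [Module.finrank_pi, Fintype.card_fin] at h1
      omega
    let kb : Module.Basis (Fin 3) ℂ (LinearMap.ker ψ) := Module.finBasisOfFinrankEq ℂ _ hker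
    have hkmem : ∀ i : Fin 3, ψ (kb i : Fin 6 → ℂ) = 0 := by
      intro i; exact LinearMap.mem_ker.mp (kb i).2
    have hkb0 : ∀ i : Fin 3, (kb i : Fin 6 → ℂ) 0 = 0 := by
      intro i; have := congrFun (hkmem i) 0; rw [hψ0] at this; simpa using this
    have hkb5 : ∀ i : Fin 3, (kb i : Fin 6 → ℂ) 5 = 0 := by
      intro i; have := congrFun (hkmem i) 1; rw [hψ1] at this; simpa using this
    have hkbφ : ∀ i : Fin 3, φ (kb i : Fin 6 → ℂ) = 0 := by
      intro i; have := congrFun (hkmem i) 2; rw [hψ2] at this; simpa using this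
    set v : Fin 6 → (Fin 6 → ℂ) :=
      ![ee 0, kb 0, kb 1, kb 2, ee k0, ee 5] with hvdef
    have hv0 : v 0 = ee 0 := rfl
    have hv1 : v 1 = kb 0 := rfl
    have hv2 : v 2 = kb 1 := rfl
    have hv3 : v 3 = kb 2 := rfl
    have hv4 : v 4 = ee k0 := rfl
    have hv5 : v 5 = ee 5 := rfl
    have hli : LinearIndependent ℂ v := by
      rw [Fintype.linearIndependent_iff]
      intro a ha
      rw [Fin.sum_univ_six, hv0, hv1, hv2, hv3, hv4, hv5] at ha
      have hc0 : a 0 = 0 := by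
        have h := congrFun ha 0
        simp only [Pi.add_apply, Pi.smul_apply, smul_eq_mul, Pi.zero_apply,
          hkb0, hee0, ee_apply] at h
        simpa using h
      have hc5 : a 5 = 0 := by
        have h := congrFun ha 5
        simp only [Pi.add_apply, Pi.smul_apply, smul_eq_mul, Pi.zero_apply,
          hkb5, hee5, ee_apply] at h
        simpa using h
      have hc4 : a 4 = 0 := by
        have h : a 0 * φ (ee 0) + a 1 * φ ((kb 0 : Fin 6 → ℂ)) + a 2 * φ ((kb 1 : Fin 6 → ℂ))
            + a 3 * φ ((kb 2 : Fin 6 → ℂ)) + a 4 * φ (ee k0) + a 5 * φ (ee 5) = 0 := by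
          have h := congrArg φ ha
          simpa only [map_add, map_smul, smul_eq_mul, φ.map_zero] using h
        rw [hkbφ 0, hkbφ 1, hkbφ 2, hc0, hc5, hφdef, phi_ee, phi_ee, phi_ee] at h
        simp only [zero_mul, mul_zero, add_zero, zero_add] at h
        exact (mul_eq_zero.mp h).resolve_right hck0
      have hrest : a 1 • kb 0 + a 2 • kb 1 + a 3 • kb 2 = (0 : LinearMap.ker ψ) := by
        rw [hc0, hc4, hc5] at ha
        simp only [zero_smul, zero_add, add_zero] at ha
        apply Subtype.ext
        simp only [Submodule.coe_add, SetLike.val_smul, ZeroMemClass.coe_zero]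
        exact ha
      have h123 := Fintype.linearIndependent_iff.mp kb.linearIndependent
        ![a 1, a 2, a 3] (by rw [Fin.sum_univ_three]; simpa only [Matrix.cons_val_zero, Matrix.cons_val_one, Matrix.head_cons, Matrix.cons_val_two, Matrix.tail_cons] using hrest)
      intro i
      fin_cases i
      · exact hc0
      · exact h123 0
      · exact h123 1
      · exact h123 2
      · exact hc4
      · exact hc5
    have hcard : Fintype.card (Fin 6) = Module.finrank ℂ (Fin 6 → ℂ) := by
      simp [Module.finrank_pi]
    let B : Module.Basis (Fin 6) ℂ (Fin 6 → ℂ) := basisOfLinearIndependentOfCardEqFinrank hli hcard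
    have hB : ⇑B = v := coe_basisOfLinearIndependentOfCardEqFinrank hli hcard
    set M : Matrix (Fin 6) (Fin 6) ℂ := (Pi.basisFun ℂ (Fin 6)).toMatrix ⇑B with hMdef
    have hM : ∀ i j, M i j = v j i := by
      intro i j
      rw [hMdef, Module.Basis.toMatrix_apply, hB, Pi.basisFun_repr]
    have hMunit : IsUnit M := by
      have : Invertible M := (Pi.basisFun ℂ (Fin 6)).invertibleToMatrix B
      exact isUnit_of_invertible M
    refine ⟨M, hMunit, ?_, ?_, ?_, ?_, ?_⟩
    · intro k
      rw [hM]
      rcases eq_or_ne k 0 with h | h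
      · subst h; simp [hv0, ee_apply]
      · simp only [h, if_false]
        have : k = 1 ∨ k = 2 ∨ k = 3 ∨ k = 4 ∨ k = 5 := by omega
        rcases this with h|h|h|h|h <;> subst h
        · rw [hv1]; exact hkb0 0
        · rw [hv2]; exact hkb0 1
        · rw [hv3]; exact hkb0 2
        · rw [hv4]; exact hee0
        · simp [hv5, ee_apply]
    · intro i
      rw [hM, hv0, ee_apply]
      rcases eq_or_ne i 0 with h | h
      · subst h; simp
      · simp [h, Ne.symm h]
    · intro k
      rw [hM]
      rcases eq_or_ne k 5 with h | h
      · subst h; simp [hv5, ee_apply]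
      · simp only [h, if_false]
        have : k = 0 ∨ k = 1 ∨ k = 2 ∨ k = 3 ∨ k = 4 := by omega
        rcases this with h|h|h|h|h <;> subst h
        · simp [hv0, ee_apply]
        · rw [hv1]; exact hkb5 0
        · rw [hv2]; exact hkb5 1
        · rw [hv3]; exact hkb5 2
        · rw [hv4]; exact hee5
    · intro i
      rw [hM, hv5, ee_apply]
      rcases eq_or_ne i 5 with h | h
      · subst h; simp
      · simp [h, Ne.symm h]
    · intro k hk0 hk4 hk5
      have hφcol : ∑ j, c j * M j k = φ (v k) := by
        rw [hφdef, phi_apply]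
        congr 1; funext j; rw [hM]
      rw [hφcol]
      have hk : k = 1 ∨ k = 2 ∨ k = 3 := by omega
      rcases hk with h | h | h <;> subst h
      · rw [hv1]; exact hkbφ 0
      · rw [hv2]; exact hkbφ 1
      · rw [hv3]; exact hkbφ 2



/-- total degree of an exponent vector -/
def tot (d : Fin 6 →₀ ℕ) : ℕ := d 0 + d 1 + d 2 + d 3 + d 4 + d 5

lemma tot_eq_degree (d : Fin 6 →₀ ℕ) : d.degree = tot d := by
  rw [Finsupp.degree]
  show ∑ i ∈ d.support, d i = tot d
  rw [Finset.sum_subset (Finset.subset_univ _)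
    (fun i _ hi => Finsupp.notMem_support_iff.mp hi)]
  rw [Fin.sum_univ_six]
  rfl

lemma supp_tot {g : MP} (hg : g.IsHomogeneous 3) : ∀ d ∈ g.support, tot d = 3 := by
  intro d hd
  rw [← tot_eq_degree]
  by_contra hne
  exact mem_support_iff.mp hd (hg.coeff_eq_zero hne)

noncomputable def pat (j : Fin 6) : Fin 6 →₀ ℕ :=
  Finsupp.single 0 1 + Finsupp.single j 1 + Finsupp.single 5 1

lemma pat_apply (j i : Fin 6) : pat j i =
    (if (0 : Fin 6) = i then 1 else 0) + (if j = i then 1 else 0)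
      + (if (5 : Fin 6) = i then 1 else 0) := by
  simp [pat, Finsupp.single_apply]

lemma pat_inj {a b : Fin 6} (h : pat a = pat b) : a = b := by
  by_cases hba : b = a
  · exact hba.symm
  · have ha := DFunLike.congr_fun h a
    rw [pat_apply, pat_apply, if_pos rfl, if_neg hba] at ha
    omega

lemma shape7 (d : Fin 6 →₀ ℕ) (h3 : tot d = 3) (h7 : d 0 ≤ d 5)
    (hnp : ∀ j, d ≠ pat j) : 2 * d 0 ≤ d 5 := by
  rw [tot] at h3
  by_cases h0 : d 0 = 0
  · omega
  · by_cases h5 : 2 ≤ d 5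
    · omega
    · -- d 0 = 1, d 5 = 1
      have hd0 : d 0 = 1 := by omega
      have hd5 : d 5 = 1 := by omega
      have hmid : d 1 = 1 ∨ d 2 = 1 ∨ d 3 = 1 ∨ d 4 = 1 := by omega
      have hj : ∃ j : Fin 6, d = pat j := by
        rcases hmid with h | h | h | h
        · refine ⟨1, ?_⟩
          ext i
          fin_cases i <;> simp [pat_apply] <;> omega
        · refine ⟨2, ?_⟩
          ext i
          fin_cases i <;> simp [pat_apply] <;> omega
        · refine ⟨3, ?_⟩
          ext i
          fin_cases i <;> simp [pat_apply] <;> omega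
        · refine ⟨4, ?_⟩
          ext i
          fin_cases i <;> simp [pat_apply] <;> omega
      obtain ⟨j, hj⟩ := hj
      exact absurd hj (hnp j)



lemma triple_eq (i j k : Fin 6) (r : ℂ) :
    monomial (Finsupp.single i 1 + Finsupp.single j 1 + Finsupp.single k 1) r
      = C r * (X i * X j * X k) := by
  rw [X, X, X, C_apply, monomial_mul, monomial_mul, monomial_mul, zero_add]
  norm_num

lemma aeval_triple (f : Fin 6 → MP) (i j k : Fin 6) (r : ℂ) :
    aeval f (monomial (Finsupp.single i 1 + Finsupp.single j 1 + Finsupp.single k 1) r)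
      = C r * (f i * f j * f k) := by
  rw [triple_eq, map_mul, map_mul, map_mul, aeval_X, aeval_X, aeval_X, aeval_C]
  rfl

theorem main2 (g : MP) (h3 : ∀ d ∈ g.support, tot d = 3)
    (h7 : ∀ d ∈ g.support, d 0 ≤ d 5) :
    ∃ T : Matrix.GeneralLinearGroup (Fin 6) ℂ,
      ∀ d ∈ (changeCoords T g).support, monomialWeight ![2, 0, 0, 0, -1, -1] d ≤ 0 := by
  classical
  set w6 : Fin 6 → ℤ := ![2, 0, 0, 0, -1, -1] with hw6
  have hw60 : w6 0 = 2 := rfl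
  have hw61 : w6 1 = 0 := rfl
  have hw62 : w6 2 = 0 := rfl
  have hw63 : w6 3 = 0 := rfl
  have hw64 : w6 4 = -1 := rfl
  have hw65 : w6 5 = -1 := rfl
  set c : Fin 6 → ℂ := fun j => coeff (pat j) g with hcdef
  have hc0 : c 0 = 0 := by
    rw [hcdef]
    by_contra hne
    have hmem : pat 0 ∈ g.support := mem_support_iff.mpr hne
    have := h7 _ hmem
    rw [pat_apply, pat_apply] at this
    simp at this
  obtain ⟨M, hMu, hrow0, hcol0, hrow5, hcol5, horth⟩ := exists_good_matrix c
  refine ⟨hMu.unit, ?_⟩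
  have hTM : ((hMu.unit : Matrix.GeneralLinearGroup (Fin 6) ℂ) : Matrix (Fin 6) (Fin 6) ℂ) = M :=
    hMu.unit_spec
  set fT : Fin 6 → MP := fun i => ∑ k, M i k • X k with hfTdef
  have hcc : changeCoords hMu.unit g = aeval fT g := by
    rw [changeCoords, hTM]
  have hfTapp : ∀ i, fT i = ∑ k, M i k • X k := fun i => rfl
  have hfT0 : fT 0 = X 0 := by
    rw [hfTapp 0]
    rw [Fin.sum_univ_six]
    rw [hrow0 0, hrow0 1, hrow0 2, hrow0 3, hrow0 4, hrow0 5]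
    simp
  have hfT5 : fT 5 = X 5 := by
    rw [hfTapp 5]
    rw [Fin.sum_univ_six]
    rw [hrow5 0, hrow5 1, hrow5 2, hrow5 3, hrow5 4, hrow5 5]
    simp
  have hfTmid : ∀ i : Fin 6, i ≠ 0 → i ≠ 5 → okw w6 0 (fT i) := by
    intro i hi0 hi5
    rw [hfTapp i]
    apply okw_sum
    intro k _
    rcases eq_or_ne k 0 with h | hk0
    · subst h
      rw [hcol0 i, if_neg hi0]
      rw [zero_smul]
      exact okw_zero _ _
    rcases eq_or_ne k 5 with h | hk5
    · subst h
      rw [hcol5 i, if_neg hi5]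
      rw [zero_smul]
      exact okw_zero _ _
    · apply okw_smul
      apply okw_mono _ (okw_X w6 k)
      have : k = 1 ∨ k = 2 ∨ k = 3 ∨ k = 4 := by omega
      rcases this with h | h | h | h <;> subst h <;> simp [hw61, hw62, hw63, hw64]
  have hm : ∀ i : Fin 6, okw w6 ((![2, 0, 0, 0, 0, -1] : Fin 6 → ℤ) i) (fT i) := by
    intro i
    rcases eq_or_ne i 0 with h | hi0
    · subst h
      rw [hfT0]
      have : (![2, 0, 0, 0, 0, -1] : Fin 6 → ℤ) 0 = w6 0 := rfl
      rw [this]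
      exact okw_X w6 0
    rcases eq_or_ne i 5 with h | hi5
    · subst h
      rw [hfT5]
      have : (![2, 0, 0, 0, 0, -1] : Fin 6 → ℤ) 5 = w6 5 := rfl
      rw [this]
      exact okw_X w6 5
    · apply okw_mono _ (hfTmid i hi0 hi5)
      have : i = 1 ∨ i = 2 ∨ i = 3 ∨ i = 4 := by omega
      rcases this with h | h | h | h <;> subst h <;> exact le_of_eq rfl
  -- the grouped part
  set B : MP := ∑ j : Fin 6, monomial (pat j) (c j) with hBdef
  have hcoeffB : ∀ j, coeff (pat j) B = c j := by
    intro j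
    rw [hBdef, coeff_sum]
    rw [Finset.sum_eq_single j]
    · rw [coeff_monomial, if_pos rfl]
    · intro j' _ hne
      rw [coeff_monomial, if_neg (fun h => hne (pat_inj h))]
    · intro h
      exact absurd (Finset.mem_univ j) h
  have hBok : okw w6 0 (aeval fT B) := by
    have hB1 : aeval fT B = (X 0 * X 5) * ∑ j : Fin 6, C (c j) * fT j := by
      rw [hBdef, map_sum, Finset.mul_sum]
      apply Finset.sum_congr rfl
      intro j _
      rw [pat, aeval_triple, hfT0, hfT5]
      ring
    have hB2 : ∑ j : Fin 6, C (c j) * fT j = ∑ k : Fin 6, (∑ j : Fin 6, c j * M j k) • X k := by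
      have hstep : ∀ j : Fin 6, C (c j) * fT j = ∑ k : Fin 6, (c j * M j k) • X k := by
        intro j
        rw [hfTapp j, Finset.mul_sum]
        apply Finset.sum_congr rfl
        intro k _
        rw [C_mul', smul_smul]
      rw [Finset.sum_congr rfl (fun j _ => hstep j), Finset.sum_comm]
      apply Finset.sum_congr rfl
      intro k _
      rw [Finset.sum_smul]
    rw [hB1, hB2]
    have hXX : okw w6 1 (X 0 * X 5 : MP) := by
      have := okw_mul (okw_X w6 0) (okw_X w6 5)
      rw [hw60, hw65] at this
      exact this
    have hSum : okw w6 (-1) (∑ k : Fin 6, (∑ j : Fin 6, c j * M j k) • X k) := by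
      apply okw_sum
      intro k _
      rcases eq_or_ne k 0 with h | hk0
      · subst h
        have hz : ∑ j : Fin 6, c j * M j 0 = 0 := by
          rw [Fin.sum_univ_six]
          rw [hcol0 0, hcol0 1, hcol0 2, hcol0 3, hcol0 4, hcol0 5]
          simp [hc0]
        rw [hz, zero_smul]
        exact okw_zero _ _
      rcases eq_or_ne k 4 with h | hk4
      · subst h
        apply okw_smul
        have := okw_X w6 4
        rwa [hw64] at this
      rcases eq_or_ne k 5 with h | hk5
      · subst h
        apply okw_smul
        have := okw_X w6 5
        rwa [hw65] at this
      · rw [horth k hk0 hk4 hk5, zero_smul]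
        exact okw_zero _ _
    have := okw_mul hXX hSum
    norm_num at this
    exact this
  -- the rest of g
  have hGBok : okw w6 0 (aeval fT (g - B)) := by
    rw [← support_sum_monomial_coeff (g - B), map_sum]
    apply okw_sum
    intro d hd
    have hdne : coeff d (g - B) ≠ 0 := mem_support_iff.mp hd
    have hnp : ∀ j, d ≠ pat j := by
      intro j hj
      rw [hj, coeff_sub, hcoeffB, hcdef] at hdne
      simp at hdne
    have hcoeffBd : coeff d B = 0 := by
      rw [hBdef, coeff_sum]
      apply Finset.sum_eq_zero
      intro j _
      rw [coeff_monomial, if_neg (fun h => (hnp j) h.symm)]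
    have hdg : d ∈ g.support := by
      rw [mem_support_iff]
      intro hgz
      rw [coeff_sub, hgz, hcoeffBd] at hdne
      simp at hdne
    have hshape := shape7 d (h3 d hdg) (h7 d hdg) hnp
    have hmem := okw_aeval_monomial fT _ hm d (coeff d (g - B))
    apply okw_mono _ hmem
    rw [Fin.sum_univ_six]
    have e0 : (![2, 0, 0, 0, 0, -1] : Fin 6 → ℤ) 0 = 2 := rfl
    have e1 : (![2, 0, 0, 0, 0, -1] : Fin 6 → ℤ) 1 = 0 := rfl
    have e2 : (![2, 0, 0, 0, 0, -1] : Fin 6 → ℤ) 2 = 0 := rfl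
    have e3 : (![2, 0, 0, 0, 0, -1] : Fin 6 → ℤ) 3 = 0 := rfl
    have e4 : (![2, 0, 0, 0, 0, -1] : Fin 6 → ℤ) 4 = 0 := rfl
    have e5 : (![2, 0, 0, 0, 0, -1] : Fin 6 → ℤ) 5 = -1 := rfl
    rw [e0, e1, e2, e3, e4, e5]
    omega
  -- conclude
  have hok : okw w6 0 (changeCoords hMu.unit g) := by
    rw [hcc]
    have : g = B + (g - B) := by ring
    rw [this, map_add]
    exact okw_add hBok hGBok
  intro d hd
  by_contra hlt
  rw [not_le] at hlt
  exact mem_support_iff.mp hd (hok d hlt)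


lemma mw7_eq (d : Fin 6 →₀ ℕ) :
    monomialWeight ![1, 0, 0, 0, 0, -1] d = (d 0 : ℤ) - d 5 := by
  rw [monomialWeight, Fin.sum_univ_six]
  have e0 : (![1, 0, 0, 0, 0, -1] : Fin 6 → ℤ) 0 = 1 := rfl
  have e1 : (![1, 0, 0, 0, 0, -1] : Fin 6 → ℤ) 1 = 0 := rfl
  have e2 : (![1, 0, 0, 0, 0, -1] : Fin 6 → ℤ) 2 = 0 := rfl
  have e3 : (![1, 0, 0, 0, 0, -1] : Fin 6 → ℤ) 3 = 0 := rfl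
  have e4 : (![1, 0, 0, 0, 0, -1] : Fin 6 → ℤ) 4 = 0 := rfl
  have e5 : (![1, 0, 0, 0, 0, -1] : Fin 6 → ℤ) 5 = -1 := rfl
  rw [e0, e1, e2, e3, e4, e5]
  ring

lemma mw8_eq (d : Fin 6 →₀ ℕ) :
    monomialWeight ![1, 1, 0, 0, 0, -2] d = (d 0 : ℤ) + d 1 - 2 * d 5 := by
  rw [monomialWeight, Fin.sum_univ_six]
  have e0 : (![1, 1, 0, 0, 0, -2] : Fin 6 → ℤ) 0 = 1 := rfl
  have e1 : (![1, 1, 0, 0, 0, -2] : Fin 6 → ℤ) 1 = 1 := rfl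
  have e2 : (![1, 1, 0, 0, 0, -2] : Fin 6 → ℤ) 2 = 0 := rfl
  have e3 : (![1, 1, 0, 0, 0, -2] : Fin 6 → ℤ) 3 = 0 := rfl
  have e4 : (![1, 1, 0, 0, 0, -2] : Fin 6 → ℤ) 4 = 0 := rfl
  have e5 : (![1, 1, 0, 0, 0, -2] : Fin 6 → ℤ) 5 = -2 := rfl
  rw [e0, e1, e2, e3, e4, e5]
  ring

noncomputable def qa : Fin 6 →₀ ℕ :=
  Finsupp.single 0 1 + Finsupp.single 0 1 + Finsupp.single 5 1
noncomputable def qb : Fin 6 →₀ ℕ :=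
  Finsupp.single 0 1 + Finsupp.single 1 1 + Finsupp.single 5 1
noncomputable def qc : Fin 6 →₀ ℕ :=
  Finsupp.single 1 1 + Finsupp.single 1 1 + Finsupp.single 5 1

lemma qa_apply (i : Fin 6) : qa i =
    (if (0 : Fin 6) = i then 1 else 0) + (if (0 : Fin 6) = i then 1 else 0)
      + (if (5 : Fin 6) = i then 1 else 0) := by
  simp [qa, Finsupp.single_apply]

lemma qb_apply (i : Fin 6) : qb i =
    (if (0 : Fin 6) = i then 1 else 0) + (if (1 : Fin 6) = i then 1 else 0)
      + (if (5 : Fin 6) = i then 1 else 0) := by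
  simp [qb, Finsupp.single_apply]

lemma qc_apply (i : Fin 6) : qc i =
    (if (1 : Fin 6) = i then 1 else 0) + (if (1 : Fin 6) = i then 1 else 0)
      + (if (5 : Fin 6) = i then 1 else 0) := by
  simp [qc, Finsupp.single_apply]

lemma shape8 (d : Fin 6 →₀ ℕ) (h3 : tot d = 3) (h8 : d 0 + d 1 ≤ 2 * d 5)
    (hna : d ≠ qa) (hnb : d ≠ qb) (hnc : d ≠ qc) : d 0 + d 1 ≤ d 5 := by
  rw [tot] at h3
  by_contra hlt
  -- then d 5 = 1, d 0 + d 1 = 2, and the middle entries vanish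
  have h5 : d 5 = 1 := by omega
  have h01 : d 0 + d 1 = 2 := by omega
  have hmid : d 2 = 0 ∧ d 3 = 0 ∧ d 4 = 0 := by omega
  have hd0 : d 0 = 2 ∨ d 0 = 1 ∨ d 0 = 0 := by omega
  rcases hd0 with h | h | h
  · apply hna
    ext i
    fin_cases i <;> simp [qa_apply] <;> omega
  · apply hnb
    ext i
    fin_cases i <;> simp [qb_apply] <;> omega
  · apply hnc
    ext i
    fin_cases i <;> simp [qc_apply] <;> omega

lemma shape8a (d : Fin 6 →₀ ℕ) (h3 : tot d = 3) (h8 : d 0 + d 1 ≤ 2 * d 5)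
    (hna : d ≠ qa) : d 0 ≤ d 5 := by
  rw [tot] at h3
  by_contra hlt
  have h5 : d 5 = 1 := by omega
  have h0 : d 0 = 2 := by omega
  have hrest : d 1 = 0 ∧ d 2 = 0 ∧ d 3 = 0 ∧ d 4 = 0 := by omega
  apply hna
  ext i
  fin_cases i <;> simp [qa_apply] <;> omega

lemma changeCoords_mul (S T : Matrix.GeneralLinearGroup (Fin 6) ℂ) (g : MP) :
    changeCoords (S * T) g = changeCoords T (changeCoords S g) := by
  rw [changeCoords, changeCoords, changeCoords]
  have hcomp : (aeval (R := ℂ) (fun i => ∑ j, (T : Matrix (Fin 6) (Fin 6) ℂ) i j • X j)) ((aeval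
      (fun i => ∑ j, (S : Matrix (Fin 6) (Fin 6) ℂ) i j • X j)) g)
      = (aeval (fun i => (aeval (fun i' => ∑ j, (T : Matrix (Fin 6) (Fin 6) ℂ) i' j • (X j : MP)))
          (∑ j, (S : Matrix (Fin 6) (Fin 6) ℂ) i j • (X j : MP)))) g :=
    comp_aeval_apply (fun i => ∑ j, (S : Matrix (Fin 6) (Fin 6) ℂ) i j • X j)
      ((aeval (fun i' => ∑ j, (T : Matrix (Fin 6) (Fin 6) ℂ) i' j • (X j : MP))) :
        MP →ₐ[ℂ] MP) g
  rw [hcomp]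
  have hfun : ∀ i : Fin 6, (aeval (R := ℂ) (fun i' => ∑ j, (T : Matrix (Fin 6) (Fin 6) ℂ) i' j • (X j : MP)))
      (∑ j, (S : Matrix (Fin 6) (Fin 6) ℂ) i j • (X j : MP))
      = ∑ j, ((S * T : Matrix.GeneralLinearGroup (Fin 6) ℂ) : Matrix (Fin 6) (Fin 6) ℂ) i j • X j := by
    intro i
    rw [map_sum ((aeval (fun i' => ∑ j, (T : Matrix (Fin 6) (Fin 6) ℂ) i' j • (X j : MP))) : MP →ₐ[ℂ] MP)
      (fun k => (S : Matrix (Fin 6) (Fin 6) ℂ) i k • X k) Finset.univ]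
    have hterm : ∀ k : Fin 6, (aeval (R := ℂ) (fun i' => ∑ j, (T : Matrix (Fin 6) (Fin 6) ℂ) i' j • (X j : MP)))
        ((S : Matrix (Fin 6) (Fin 6) ℂ) i k • X k)
        = ∑ j, ((S : Matrix (Fin 6) (Fin 6) ℂ) i k * (T : Matrix (Fin 6) (Fin 6) ℂ) k j) • X j := by
      intro k
      rw [map_smul, aeval_X, Finset.smul_sum]
      apply Finset.sum_congr rfl
      intro j _
      rw [smul_smul]
    rw [Finset.sum_congr rfl (fun k _ => hterm k), Finset.sum_comm]
    apply Finset.sum_congr rfl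
    intro j _
    rw [← Finset.sum_smul]
    congr 1
  rw [show ((fun i => (aeval (R := ℂ) (fun i' => ∑ j, (T : Matrix (Fin 6) (Fin 6) ℂ) i' j • (X j : MP)))
      (∑ j, (S : Matrix (Fin 6) (Fin 6) ℂ) i j • (X j : MP))) : Fin 6 → MP)
      = fun i => ∑ j, ((S * T : Matrix.GeneralLinearGroup (Fin 6) ℂ) : Matrix (Fin 6) (Fin 6) ℂ) i j • X j
    from funext hfun]

lemma sum_smul_X_isHomog (M : Matrix (Fin 6) (Fin 6) ℂ) (i : Fin 6) :
    (∑ j, M i j • X j : MP).IsHomogeneous 1 := by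
  rw [← mem_homogeneousSubmodule]
  apply Submodule.sum_mem
  intro j _
  apply Submodule.smul_mem
  rw [mem_homogeneousSubmodule]
  exact isHomogeneous_X _ _

lemma okw_isHomog {f : Fin 6 → MP} (hf : ∀ i, (f i).IsHomogeneous 1)
    {g : MP} (hg : g.IsHomogeneous 3) : (aeval f g).IsHomogeneous 3 := by
  have h := MvPolynomial.IsHomogeneous.aeval (τ := Fin 6) (S := ℂ) hg f hf
  norm_num at h
  exact h

set_option maxHeartbeats 3200000 in
theorem stage1 (g : MP) (hg : g.IsHomogeneous 3)
    (h8 : ∀ d ∈ g.support, d 0 + d 1 ≤ 2 * d 5) :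
    ∃ T : Matrix.GeneralLinearGroup (Fin 6) ℂ,
      ∀ d ∈ (changeCoords T g).support, monomialWeight ![2, 0, 0, 0, -1, -1] d ≤ 0 := by
  classical
  have h3 := supp_tot hg
  set a := coeff qa g with hadef
  set b := coeff qb g with hbdef
  set c' := coeff qc g with hcdef
  by_cases ha : a = 0
  · apply main2 g h3
    intro d hd
    apply shape8a d (h3 d hd) (h8 d hd)
    intro hdq
    rw [hdq] at hd
    exact mem_support_iff.mp hd (by rw [← hadef] at *; exact ha)
  · -- find a root of a s² + b s + c'
    obtain ⟨s, hs⟩ : ∃ s : ℂ, a * s * s + b * s + c' = 0 := by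
      obtain ⟨s, hs⟩ := Complex.exists_root (f := Polynomial.C a * Polynomial.X ^ 2
        + Polynomial.C b * Polynomial.X + Polynomial.C c')
        (by rw [Polynomial.degree_quadratic ha]; norm_num)
      refine ⟨s, ?_⟩
      have := hs
      simp only [Polynomial.IsRoot, Polynomial.eval_add, Polynomial.eval_mul,
        Polynomial.eval_pow, Polynomial.eval_C, Polynomial.eval_X] at this
      linear_combination this
    set w7 : Fin 6 → ℤ := ![1, 0, 0, 0, 0, -1] with hw7
    have hw70 : w7 0 = 1 := rfl
    have hw71 : w7 1 = 0 := rfl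
    have hw75 : w7 5 = -1 := rfl
    set T1mat : Matrix (Fin 6) (Fin 6) ℂ := Matrix.of fun i k =>
      if i = 0 then (if k = 0 then s else if k = 1 then 1 else 0)
      else if i = 1 then (if k = 0 then 1 else 0)
      else (if i = k then 1 else 0) with hT1mat
    set T1inv : Matrix (Fin 6) (Fin 6) ℂ := Matrix.of fun i k =>
      if i = 0 then (if k = 1 then 1 else 0)
      else if i = 1 then (if k = 0 then 1 else if k = 1 then -s else 0)
      else (if i = k then 1 else 0) with hT1inv
    have hT1me : ∀ i k, T1mat i k =
        (if i = 0 then (if k = 0 then s else if k = 1 then 1 else 0)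
        else if i = 1 then (if k = 0 then 1 else 0)
        else (if i = k then 1 else 0)) := fun i k => rfl
    have hT1ie : ∀ i k, T1inv i k =
        (if i = 0 then (if k = 1 then 1 else 0)
        else if i = 1 then (if k = 0 then 1 else if k = 1 then -s else 0)
        else (if i = k then 1 else 0)) := fun i k => rfl
    have hmul1 : T1mat * T1inv = 1 := by
      ext i j
      rw [Matrix.mul_apply, Fin.sum_univ_six]
      simp only [hT1me, hT1ie, Matrix.one_apply]
      fin_cases i <;> fin_cases j <;> simp (config := { decide := true })
    have hmul2 : T1inv * T1mat = 1 := by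
      ext i j
      rw [Matrix.mul_apply, Fin.sum_univ_six]
      simp only [hT1me, hT1ie, Matrix.one_apply]
      fin_cases i <;> fin_cases j <;> simp (config := { decide := true })
    set T1 : Matrix.GeneralLinearGroup (Fin 6) ℂ := ⟨T1mat, T1inv, hmul1, hmul2⟩ with hT1
    have hT1coe : (T1 : Matrix (Fin 6) (Fin 6) ℂ) = T1mat := rfl
    set fT1 : Fin 6 → MP := fun i => ∑ k, T1mat i k • X k with hfT1def
    have hcc1 : changeCoords T1 g = aeval fT1 g := rfl
    have hfapp : ∀ i, fT1 i = ∑ k, T1mat i k • X k := fun i => rfl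
    have hf0 : fT1 0 = s • X 0 + X 1 := by
      rw [hfapp 0, Fin.sum_univ_six]
      simp only [hT1me]
      simp (config := { decide := true })
    have hf1 : fT1 1 = X 0 := by
      rw [hfapp 1, Fin.sum_univ_six]
      simp only [hT1me]
      simp (config := { decide := true })
    have hf2 : fT1 2 = X 2 := by
      rw [hfapp 2, Fin.sum_univ_six]
      simp only [hT1me]
      simp (config := { decide := true })
    have hf3 : fT1 3 = X 3 := by
      rw [hfapp 3, Fin.sum_univ_six]
      simp only [hT1me]
      simp (config := { decide := true })
    have hf4 : fT1 4 = X 4 := by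
      rw [hfapp 4, Fin.sum_univ_six]
      simp only [hT1me]
      simp (config := { decide := true })
    have hf5 : fT1 5 = X 5 := by
      rw [hfapp 5, Fin.sum_univ_six]
      simp only [hT1me]
      simp (config := { decide := true })
    -- weights of the substituted variables, with respect to w7
    have hmw : ∀ i : Fin 6, okw w7 ((![1, 1, 0, 0, 0, -1] : Fin 6 → ℤ) i) (fT1 i) := by
      intro i
      have hi : i = 0 ∨ i = 1 ∨ i = 2 ∨ i = 3 ∨ i = 4 ∨ i = 5 := by omega
      rcases hi with h | h | h | h | h | h <;> subst h
      · have e : (![1, 1, 0, 0, 0, -1] : Fin 6 → ℤ) 0 = 1 := rfl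
        rw [e, hf0]
        apply okw_add
        · apply okw_smul
          have := okw_X w7 0
          rwa [hw70] at this
        · apply okw_mono _ (okw_X w7 1)
          rw [hw71]
          omega
      · have e : (![1, 1, 0, 0, 0, -1] : Fin 6 → ℤ) 1 = 1 := rfl
        rw [e, hf1]
        have := okw_X w7 0
        rwa [hw70] at this
      · have e : (![1, 1, 0, 0, 0, -1] : Fin 6 → ℤ) 2 = 0 := rfl
        rw [e, hf2]
        have h2 : w7 2 = 0 := rfl
        have := okw_X w7 2
        rwa [h2] at this
      · have e : (![1, 1, 0, 0, 0, -1] : Fin 6 → ℤ) 3 = 0 := rfl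
        rw [e, hf3]
        have h2 : w7 3 = 0 := rfl
        have := okw_X w7 3
        rwa [h2] at this
      · have e : (![1, 1, 0, 0, 0, -1] : Fin 6 → ℤ) 4 = 0 := rfl
        rw [e, hf4]
        have h2 : w7 4 = 0 := rfl
        have := okw_X w7 4
        rwa [h2] at this
      · have e : (![1, 1, 0, 0, 0, -1] : Fin 6 → ℤ) 5 = -1 := rfl
        rw [e, hf5]
        have := okw_X w7 5
        rwa [hw75] at this
    -- the grouped quadratic-in-(x0,x1) part
    set B1 : MP := monomial qa a + monomial qb b + monomial qc c' with hB1def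
    have hqaB1 : coeff qa B1 = a := by
      have h1 : qb ≠ qa := by
        intro h
        have := DFunLike.congr_fun h 1
        rw [qb_apply, qa_apply] at this
        simp at this
      have h2 : qc ≠ qa := by
        intro h
        have := DFunLike.congr_fun h 1
        rw [qc_apply, qa_apply] at this
        simp at this
      rw [hB1def, coeff_add, coeff_add, coeff_monomial, coeff_monomial, coeff_monomial,
        if_pos rfl, if_neg h1, if_neg h2]
      ring
    have hqbB1 : coeff qb B1 = b := by
      have h1 : qa ≠ qb := by
        intro h
        have := DFunLike.congr_fun h 1
        rw [qb_apply, qa_apply] at this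
        simp at this
      have h2 : qc ≠ qb := by
        intro h
        have := DFunLike.congr_fun h 0
        rw [qc_apply, qb_apply] at this
        simp at this
      rw [hB1def, coeff_add, coeff_add, coeff_monomial, coeff_monomial, coeff_monomial,
        if_pos rfl, if_neg h1, if_neg h2]
      ring
    have hqcB1 : coeff qc B1 = c' := by
      have h1 : qa ≠ qc := by
        intro h
        have := DFunLike.congr_fun h 1
        rw [qc_apply, qa_apply] at this
        simp at this
      have h2 : qb ≠ qc := by
        intro h
        have := DFunLike.congr_fun h 0
        rw [qc_apply, qb_apply] at this
        simp at this
      rw [hB1def, coeff_add, coeff_add, coeff_monomial, coeff_monomial, coeff_monomial,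
        if_pos rfl, if_neg h1, if_neg h2]
      ring
    have hB1ok : okw w7 0 (aeval fT1 B1) := by
      have hC : Polynomial.eval 0 0 = 0 ∨ True := Or.inr trivial
      have hroot : C a * C s * C s + C b * C s + C c' = (0 : MP) := by
        rw [← map_mul, ← map_mul, ← map_mul, ← map_add, ← map_add, hs, map_zero]
      have hexp : aeval fT1 B1 = (C 2 * C a * C s + C b) * (X 0 * X 1 * X 5)
          + C a * (X 1 * X 1 * X 5) := by
        rw [hB1def, map_add, map_add, qa, qb, qc, aeval_triple, aeval_triple, aeval_triple,
          hf0, hf1, hf5]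
        have hsmul : s • (X 0 : MP) = C s * X 0 := (C_mul').symm
        rw [hsmul]
        rw [show (C (2 : ℂ) : MP) = 2 from map_ofNat _ 2]
        linear_combination hroot * ((X 0 : MP) * X 0 * X 5)
      rw [hexp]
      apply okw_add
      · have hx0 := okw_X w7 0
        have hx1 := okw_X w7 1
        have hx5 := okw_X w7 5
        rw [hw70] at hx0
        rw [hw71] at hx1
        rw [hw75] at hx5
        have hcoef : okw w7 0 ((C 2 * C a * C s + C b : MP)) := by
          have h2 := okw_mul (okw_mul (okw_C w7 2) (okw_C w7 a)) (okw_C w7 s)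
          norm_num at h2
          exact okw_add h2 (okw_C w7 b)
        have := okw_mul hcoef (okw_mul (okw_mul hx0 hx1) hx5)
        norm_num at this
        exact this
      · have hx1 := okw_X w7 1
        have hx5 := okw_X w7 5
        rw [hw71] at hx1
        rw [hw75] at hx5
        have := okw_mul (okw_C w7 a) (okw_mul (okw_mul hx1 hx1) hx5)
        norm_num at this
        apply okw_mono _ this
        omega
    have hrestok : okw w7 0 (aeval fT1 (g - B1)) := by
      rw [← support_sum_monomial_coeff (g - B1), map_sum]
      apply okw_sum
      intro d hd
      have hdne : coeff d (g - B1) ≠ 0 := mem_support_iff.mp hd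
      have hnqa : d ≠ qa := by
        intro h
        rw [h, coeff_sub, hqaB1] at hdne
        simp [hadef] at hdne
      have hnqb : d ≠ qb := by
        intro h
        rw [h, coeff_sub, hqbB1] at hdne
        simp [hbdef] at hdne
      have hnqc : d ≠ qc := by
        intro h
        rw [h, coeff_sub, hqcB1] at hdne
        simp [hcdef] at hdne
      have hcoeffB1d : coeff d B1 = 0 := by
        rw [hB1def, coeff_add, coeff_add, coeff_monomial, coeff_monomial, coeff_monomial,
          if_neg (fun h => hnqa h.symm), if_neg (fun h => hnqb h.symm),
          if_neg (fun h => hnqc h.symm)]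
        ring
      have hdg : d ∈ g.support := by
        rw [mem_support_iff]
        intro hgz
        rw [coeff_sub, hgz, hcoeffB1d] at hdne
        simp at hdne
      have hshape := shape8 d (h3 d hdg) (h8 d hdg) hnqa hnqb hnqc
      have hmem := okw_aeval_monomial fT1 _ hmw d (coeff d (g - B1))
      apply okw_mono _ hmem
      rw [Fin.sum_univ_six]
      have e0 : (![1, 1, 0, 0, 0, -1] : Fin 6 → ℤ) 0 = 1 := rfl
      have e1 : (![1, 1, 0, 0, 0, -1] : Fin 6 → ℤ) 1 = 1 := rfl
      have e2 : (![1, 1, 0, 0, 0, -1] : Fin 6 → ℤ) 2 = 0 := rfl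
      have e3 : (![1, 1, 0, 0, 0, -1] : Fin 6 → ℤ) 3 = 0 := rfl
      have e4 : (![1, 1, 0, 0, 0, -1] : Fin 6 → ℤ) 4 = 0 := rfl
      have e5 : (![1, 1, 0, 0, 0, -1] : Fin 6 → ℤ) 5 = -1 := rfl
      rw [e0, e1, e2, e3, e4, e5]
      omega
    have hok1 : okw w7 0 (changeCoords T1 g) := by
      rw [hcc1]
      have : g = B1 + (g - B1) := by ring
      rw [this, map_add]
      exact okw_add hB1ok hrestok
    -- the transformed polynomial satisfies the hypotheses of main2
    set g1 : MP := changeCoords T1 g with hg1def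
    have hg1hom : g1.IsHomogeneous 3 := by
      rw [hg1def, changeCoords]
      apply okw_isHomog _ hg
      intro i
      exact sum_smul_X_isHomog _ i
    have h3g1 : ∀ d ∈ g1.support, tot d = 3 := supp_tot hg1hom
    have h7g1 : ∀ d ∈ g1.support, d 0 ≤ d 5 := by
      intro d hd
      have hne : coeff d g1 ≠ 0 := mem_support_iff.mp hd
      by_contra hlt
      apply hne
      apply hok1
      rw [mw7_eq]
      push_cast
      omega
    obtain ⟨T2, hT2⟩ := main2 g1 h3g1 h7g1
    refine ⟨T1 * T2, ?_⟩
    rw [changeCoords_mul]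
    exact hT2

end S678

/-- A cubic form of type S7 or S8 (all monomials of nonpositive weight with respect to
`(1,0,0,0,0,-1)` resp. `(1,1,0,0,0,-2)`) can be reduced, by an invertible linear change of
coordinates, to one of type S6 (all monomials of nonpositive weight w.r.t. `(2,0,0,0,-1,-1)`). -/
theorem s7_s8_reduce_to_s6 (g : MvPolynomial (Fin 6) ℂ) (hg : g.IsHomogeneous 3)
    (h : (∀ d ∈ g.support, monomialWeight ![1, 0, 0, 0, 0, -1] d ≤ 0) ∨
         (∀ d ∈ g.support, monomialWeight ![1, 1, 0, 0, 0, -2] d ≤ 0)) :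
    ∃ T : Matrix.GeneralLinearGroup (Fin 6) ℂ,
      ∀ d ∈ (changeCoords T g).support, monomialWeight ![2, 0, 0, 0, -1, -1] d ≤ 0 := by
  rcases h with h7 | h8
  · apply S678.main2 g (S678.supp_tot hg)
    intro d hd
    have h := h7 d hd
    rw [S678.mw7_eq] at h
    omega
  · apply S678.stage1 g hg
    intro d hd
    have h := h8 d hd
    rw [S678.mw8_eq] at h
    omega
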